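/- arXiv:1407.4498 — 6 statements merged into one kernel-verified Lean document; each statement's English description precedes it below -/
import Mathlib

section
/- Let A and Z be 0-1 matrices of dimensions m × τ' (rows indexed 1..m, columns 1..τ'). Suppose the entries of Z are i.i.d. Bernoulli random variables with success probability λ, and λ ≤ 2/τ where τ = 2τ'. Define the operator I on 0-1 matrices by: I(X)_{i,j} = 1 iff X_{i,j} = 1 and X_{i,ℓ} = 0 for all ℓ < j (i.e., the first 1 in each row). Let w(X) denote the number of 1-entries of X, and let A∧Z denote entrywise conjunction. Then E[w(I(A∧Z))] ≥ (λ/2)·w(A). -/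
/-!
Row `i` of `I(A ∧ Z)` contains exactly one `1` if row `i` of `A ∧ Z` is nonzero and none
otherwise, so the expectation is `∑ᵢ Pr(row i of A ∧ Z ≠ 0) = ∑ᵢ (1 - (1 - λ)^{w(Aᵢ)})`.
Since `λ · w(Aᵢ) ≤ λ τ' ≤ 1`, each term is at least `1 - e^{-λ w(Aᵢ)} ≥ λ w(Aᵢ) / 2`.
-/

open MeasureTheory

/-- The operator `I` on 0-1 matrices keeping only the first `1` of each row. -/
def matI {m nc : ℕ} (X : Fin m → Fin nc → Bool) : Fin m → Fin nc → Bool :=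
  fun i j => X i j && decide (∀ l : Fin nc, l < j → X i l = false)

/-- The number of `1`-entries of a 0-1 matrix. -/
def matW {m nc : ℕ} (X : Fin m → Fin nc → Bool) : ℕ :=
  (Finset.univ.filter (fun p : Fin m × Fin nc => X p.1 p.2 = true)).card

open Finset

lemma Real.div_two_le_one_sub_exp_neg {x : ℝ} (hx0 : 0 ≤ x) (hx1 : x ≤ 1) :
    x / 2 ≤ 1 - Real.exp (-x) := by
  have h : Real.exp (-x) * (x + 1) ≤ 1 := by
    calc Real.exp (-x) * (x + 1) ≤ Real.exp (-x) * Real.exp x := by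
          gcongr; exact Real.add_one_le_exp x
      _ = 1 := by rw [← Real.exp_add, neg_add_cancel, Real.exp_zero]
  nlinarith [Real.exp_pos (-x)]

lemma div_two_mul_le_one_sub_one_sub_pow {q : ℝ} (hq : 0 ≤ q) {n : ℕ} (hqn : q * n ≤ 1) :
    q / 2 * n ≤ 1 - (1 - q) ^ n := by
  rcases n.eq_zero_or_pos with rfl | hn
  · simp
  have hq1 : q ≤ 1 := by
    nlinarith [show (1 : ℝ) ≤ n by exact_mod_cast hn]
  calc q / 2 * n = q * n / 2 := by ring
    _ ≤ 1 - Real.exp (-(q * n)) := Real.div_two_le_one_sub_exp_neg (by positivity) hqn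
    _ ≤ 1 - (1 - q) ^ n := by
      rw [show -(q * n) = n * -q by ring, Real.exp_nat_mul]
      gcongr
      exact Real.one_sub_le_exp_neg q

lemma matW_eq_sum_card_row {m nc : ℕ} (X : Fin m → Fin nc → Bool) :
    matW X = ∑ i, #{j | X i j = true} := by
  rw [matW, card_filter, Fintype.sum_prod_type]
  simp only [card_filter]

lemma card_matI_row {m nc : ℕ} (X : Fin m → Fin nc → Bool) (i : Fin m) :
    #{j | matI X i j = true} = if ∃ j, X i j = true then 1 else 0 := by
  split_ifs with h
  · obtain ⟨j, hj⟩ := h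
    obtain ⟨j₀, hj₀, hmin⟩ := exists_min_image {j | X i j = true} id ⟨j, by simpa using hj⟩
    rw [card_eq_one]
    refine ⟨j₀, eq_singleton_iff_unique_mem.2 ⟨?_, fun j hj => ?_⟩⟩
    · simp only [mem_filter, mem_univ, true_and] at hj₀ hmin
      simp only [matI, mem_filter, mem_univ, true_and, Bool.and_eq_true, decide_eq_true_eq]
      refine ⟨hj₀, fun l hl => ?_⟩
      by_contra hl'
      exact absurd (hmin l (by simpa using hl')) (not_le.2 hl)
    · simp only [matI, mem_filter, mem_univ, true_and, Bool.and_eq_true, decide_eq_true_eq] at hj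
      simp only [mem_filter, mem_univ, true_and] at hj₀ hmin
      refine le_antisymm ?_ (hmin j hj.1)
      by_contra hlt
      simp [hj.2 j₀ (not_le.1 hlt)] at hj₀
  · push Not at h
    simp [matI, h]

lemma matW_matI {m nc : ℕ} (X : Fin m → Fin nc → Bool) :
    matW (matI X) = ∑ i, if ∃ j, X i j = true then 1 else 0 := by
  simp only [matW_eq_sum_card_row, card_matI_row]

section Bernoulli

variable {ι : Type*} [Fintype ι] (q : NNReal) (hq : q ≤ 1)

lemma measureReal_pi_bernoulli_forall_false (s : Finset ι) :
    (Measure.pi fun _ : ι => (PMF.bernoulli q hq).toMeasure).real {z | ∀ j ∈ s, z j = false}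
      = (1 - (q : ℝ)) ^ #s := by
  have : {z : ι → Bool | ∀ j ∈ s, z j = false} = (s : Set ι).pi fun _ => {false} := by
    ext; simp
  rw [this, measureReal_def, Measure.pi_pi_finset, prod_const,
    PMF.toMeasure_apply_singleton _ _ (measurableSet_singleton _), PMF.bernoulli_apply]
  simp only [cond_false, ENNReal.toReal_pow]
  rw [ENNReal.coe_toReal, NNReal.coe_sub hq, NNReal.coe_one]

lemma measureReal_pi_bernoulli_exists_true (s : Finset ι) :
    (Measure.pi fun _ : ι => (PMF.bernoulli q hq).toMeasure).real {z | ∃ j ∈ s, z j = true}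
      = 1 - (1 - (q : ℝ)) ^ #s := by
  have : {z : ι → Bool | ∃ j ∈ s, z j = true} = {z | ∀ j ∈ s, z j = false}ᶜ := by
    ext; simp
  rw [this, probReal_compl_eq_one_sub (Set.toFinite _).measurableSet,
    measureReal_pi_bernoulli_forall_false]

end Bernoulli

lemma integral_matW_matI_and {m nc : ℕ} (A : Fin m → Fin nc → Bool) (q : NNReal) (hq : q ≤ 1) :
    ∫ Z, (matW (matI fun i j => A i j && Z i j) : ℝ)
        ∂(Measure.pi fun _ : Fin m => Measure.pi fun _ : Fin nc => (PMF.bernoulli q hq).toMeasure)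
      = ∑ i, (1 - (1 - (q : ℝ)) ^ #{j | A i j = true}) := by
  set ν := Measure.pi fun _ : Fin nc => (PMF.bernoulli q hq).toMeasure
  have hindicator : ∀ (i : Fin m) (Z : Fin m → Fin nc → Bool),
      (if ∃ j, (A i j && Z i j) = true then 1 else 0 : ℝ)
        = (Function.eval i ⁻¹' {z | ∃ j ∈ ({j | A i j = true} : Finset _), z j = true}).indicator
            1 Z := by
    intro i Z
    simp [Set.indicator_apply]
  simp only [matW_matI, Nat.cast_sum, Nat.cast_ite, Nat.cast_one, Nat.cast_zero, hindicator]
  rw [integral_finsetSum _ fun i _ => Integrable.of_finite]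
  refine sum_congr rfl fun i _ => ?_
  rw [integral_indicator_one (Set.toFinite _).measurableSet,
    (measurePreserving_eval (fun _ => ν) i).measureReal_preimage
      (Set.toFinite _).measurableSet.nullMeasurableSet]
  exact measureReal_pi_bernoulli_exists_true q hq _

/-- Random sparsification lemma: `A` is a fixed 0-1 matrix with `τ' = τ/2` columns,
`Z` is a random 0-1 matrix whose entries are i.i.d. Bernoulli(λ) with `λ ≤ 2/τ`.
Then `E[w(I(A ∧ Z))] ≥ (λ/2)·w(A)`. -/
theorem stmt_1 (m τ' : ℕ) (A : Fin m → Fin τ' → Bool)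
    (p : ENNReal) (hp : p ≤ 1) (hlam : p.toReal ≤ 2 / (2 * τ')) :
    (∫ Z : Fin m → Fin τ' → Bool,
        (matW (matI (fun i j => A i j && Z i j)) : ℝ)
        ∂(Measure.pi fun _ : Fin m =>
            Measure.pi fun _ : Fin τ' => (PMF.bernoulli p.toNNReal (by simpa using ENNReal.toNNReal_mono ENNReal.one_ne_top hp)).toMeasure))
      ≥ p.toReal / 2 * matW A := by
  have hweight : ∀ i, p.toReal * #{j | A i j = true} ≤ 1 := by
    intro i
    rcases τ'.eq_zero_or_pos with rfl | hτ
    · simp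
    have hw : (#{j | A i j = true} : ℝ) ≤ τ' := by
      exact_mod_cast (card_filter_le _ _).trans_eq (card_fin τ')
    calc p.toReal * #{j | A i j = true} ≤ 2 / (2 * τ') * τ' := by gcongr
      _ = 1 := by field_simp
  refine le_of_le_of_eq ?_ (integral_matW_matI_and A p.toNNReal _).symm
  rw [matW_eq_sum_card_row, Nat.cast_sum, mul_sum]
  exact sum_le_sum fun i _ => div_two_mul_le_one_sub_one_sub_pow ENNReal.toReal_nonneg (hweight i)
end

section
/- In the online interval packing algorithm with preemption (intervals arrive in order of nondecreasing left endpoints; a new interval preempts a conflicting stored interval only if its right endpoint is no larger), define the forest of preemptions where the intervals preempted by I_i are children of I_i. If interval I_j = (a_j, b_j) is a descendant of I_i = (a_i, b_i) in this forest, then the point b_i (more precisely, the unit edge (b_i − 1, b_i)) is contained in I_j; in particular a_j < b_i ≤ b_j. -/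
/-- Descendants in the preemption forest: intervals `(a i, b i)` on the integer line
arrive with nondecreasing left endpoints; `P i j` means "`I_i` preempted `I_j`",
which entails that `I_j` arrived no later (`a j ≤ a i`), the two open intervals
overlap (`a j < b i` and `a i < b j`), and `b i ≤ b j`.  If `I_j` is a descendant of
`I_i` in the preemption forest (i.e. `Relation.TransGen P i j`), then the unit edge
`(b i − 1, b i)` is contained in `I_j`, i.e. `a j < b i ≤ b j`. -/
theorem stmt_8 {ι : Type*} (a b : ι → ℤ) (P : ι → ι → Prop)
    (hP : ∀ i j, P i j → a j ≤ a i ∧ a j < b i ∧ a i < b j ∧ b i ≤ b j)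
    (i j : ι) (hdesc : Relation.TransGen P i j) :
    a j < b i ∧ b i ≤ b j := by
  induction hdesc with
  | single h => exact ⟨(hP _ _ h).2.1, (hP _ _ h).2.2.2⟩
  | tail _ h ih =>
    obtain ⟨haj, _, _, hbk⟩ := hP _ _ h
    exact ⟨lt_of_le_of_lt haj ih.1, ih.2.trans hbk⟩
end

section
/- If in a sequence of intervals every descendant of I_i in the preemption forest must contain a common fixed unit edge (b_i − 1, b_i), and at most k intervals of the input contain any fixed unit edge, then I_i has at most k − 1 proper descendants in the preemption forest. -/
open Classical in
/-- If every proper descendant of `I_i` in the preemption forest contains the fixed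
unit edge `(b_i − 1, b_i)`, the interval `I_i` itself contains this edge, at most `k`
input intervals contain this edge, and no proper descendant of `I_i` equals `i`, then
`I_i` has at most `k − 1` proper descendants. -/
theorem stmt_9 {ι : Type*} [Fintype ι] (i : ι)
    (Desc : ι → Prop)      -- `Desc j` : `j` is a proper descendant of `i`
    (C : ι → Prop)          -- `C j` : interval `I_j` contains the unit edge `(b_i−1, b_i)`
    (k : ℕ)
    (hCi : C i)
    (hload : (Finset.univ.filter C).card ≤ k)
    (hdesc : ∀ j, Desc j → C j)
    (hne : ∀ j, Desc j → j ≠ i) :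
    (Finset.univ.filter Desc).card ≤ k - 1 := by
  have hsub : (Finset.univ.filter Desc) ⊆ (Finset.univ.filter C).erase i := by
    intro j hj
    simp only [Finset.mem_filter, Finset.mem_erase, Finset.mem_univ, true_and] at *
    exact ⟨hne j hj, hdesc j hj⟩
  calc (Finset.univ.filter Desc).card ≤ ((Finset.univ.filter C).erase i).card :=
        Finset.card_le_card hsub
    _ = (Finset.univ.filter C).card - 1 := by
        rw [Finset.card_erase_of_mem (by simp [hCi])]
    _ ≤ k - 1 := Nat.sub_le_sub_right hload 1
end

section
/- Every path of length at most p_max^{st} = 2(n−1)(1+B/c) in the space-time graph of a uni-directional line with n nodes projects to a path of length at most 4n in the sketch graph, provided every tile has horizontal side length at least 2B and there are at most n sketch rows. -/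
private lemma hlp1 (y d0 d1 : ℕ) (h : d0 < d1) :
    (1:ℤ) ≤ ((y + d1 : ℕ):ℤ) - ((y + d0 : ℕ):ℤ) := by push_cast; omega

private lemma hlp0 (y d0 d1 : ℕ) (h : d0 ≤ d1) :
    (0:ℤ) ≤ ((y + d1 : ℕ):ℤ) - ((y + d0 : ℕ):ℤ) := by push_cast; omega

private lemma hlp2 (m rL r0 DL D0 dτ : ℕ) (h1 : rL < m+2) (h2 : DL ≤ D0 + dτ + 1)
    (h3 : dτ ≤ 2*(m+1)) : ((rL + DL : ℕ):ℤ) - ((r0 + D0 : ℕ):ℤ) ≤ 4*(m+2) := by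
  push_cast; omega

/-- Sketch projection of a bounded path: a path in the (untilted) space-time graph of
a uni-directional line with `n` nodes is a sequence of `L` unit steps, each moving
east (time/horizontal) or north (space/vertical); its row coordinate stays below `n`.
The tiling has horizontal side `τ ≥ 2B` and vertical side `Q ≥ 1` (so there are at
most `n` sketch rows), and the tile of a vertex `(x, y)` is `(x / τ, y / Q)`.  If the
path has length `L ≤ 2(n−1)(1+B/c)` then its projection to the sketch graph (counting
the steps at which the tile changes) has length at most `4n`. -/
theorem stmt_12 (n B c τ Q L : ℕ) (hn : 2 ≤ n) (hB : 1 ≤ B) (hc : 1 ≤ c)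
    (hτ : 2 * B ≤ τ) (hQ : 1 ≤ Q)
    (w : Fin (L + 1) → ℕ × ℕ)
    (hstep : ∀ i : Fin L,
      w i.succ = ((w i.castSucc).1 + 1, (w i.castSucc).2) ∨
      w i.succ = ((w i.castSucc).1, (w i.castSucc).2 + 1))
    (hrow : ∀ i, (w i).2 < n)
    (hlen : (L : ℝ) ≤ 2 * ((n : ℝ) - 1) * (1 + (B : ℝ) / c)) :
    (Finset.univ.filter (fun i : Fin L =>
        ((w i.succ).1 / τ, (w i.succ).2 / Q) ≠
        ((w i.castSucc).1 / τ, (w i.castSucc).2 / Q))).card ≤ 4 * n := by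
  obtain ⟨m, rfl⟩ : ∃ m, n = m + 2 := ⟨n - 2, by omega⟩
  have hτ2 : 2 ≤ τ := by omega
  -- numeric bound on L
  have hL : L ≤ 2 * (m + 1) * (1 + B) := by
    have hBc : (B : ℝ) / c ≤ (B : ℝ) := by
      apply div_le_self (by positivity)
      exact_mod_cast hc
    push_cast at hlen
    have hkey : 2*((m:ℝ)+2-1)*(1+(B:ℝ)/c) ≤ 2*((m:ℝ)+1)*(1+(B:ℝ)) := by
      nlinarith [mul_nonneg (by positivity : (0:ℝ) ≤ (m:ℝ)+1) (sub_nonneg.2 hBc)]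
    have h1 : (L : ℝ) ≤ 2*((m:ℝ)+1)*(1+(B:ℝ)) := hlen.trans hkey
    have h2 : ((2 * (m + 1) * (1 + B) : ℕ) : ℝ) = 2 * ((m:ℝ) + 1) * (1 + (B:ℝ)) := by
      push_cast; ring
    exact_mod_cast h1.trans_eq h2.symm
  have hLτ : L / τ ≤ 2 * (m + 1) := by
    have h : L / τ < 2 * (m + 1) + 1 := by
      rw [Nat.div_lt_iff_lt_mul (by omega)]
      have u1 : (2*(m+1)+1) * (2*B) ≤ (2*(m+1)+1) * τ :=
        Nat.mul_le_mul le_rfl hτ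
      have u2 : (2*m+4) * 1 ≤ (2*m+4) * B := Nat.mul_le_mul le_rfl hB
      nlinarith [hL, u1, u2]
    omega
  -- potential function
  have hmin : ∀ k : ℕ, min k L < L + 1 := fun k => Nat.lt_succ_of_le (min_le_right _ _)
  set a : ℕ → ℕ := fun k => (w ⟨min k L, hmin k⟩).2 + (w ⟨min k L, hmin k⟩).1 / τ with ha
  have ec : ∀ i : Fin L, (⟨min i.1 L, hmin i.1⟩ : Fin (L+1)) = i.castSucc := by
    intro i; ext; simp [Nat.min_eq_left i.2.le]
  have es : ∀ i : Fin L, (⟨min (i.1+1) L, hmin (i.1+1)⟩ : Fin (L+1)) = i.succ := by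
    intro i; ext; simp [Nat.min_eq_left i.2]
  have key : ∀ i : Fin L,
      (if ((w i.succ).1 / τ, (w i.succ).2 / Q) ≠
        ((w i.castSucc).1 / τ, (w i.castSucc).2 / Q) then (1:ℤ) else 0)
      ≤ (a (i.1 + 1) : ℤ) - (a i.1 : ℤ) := by
    intro i
    have e1 : a i.1 = (w i.castSucc).2 + (w i.castSucc).1 / τ := by
      simp only [ha]; rw [ec i]
    have e2 : a (i.1 + 1) = (w i.succ).2 + (w i.succ).1 / τ := by
      simp only [ha]; rw [es i]
    rcases hstep i with h | h
    · -- horizontal step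
      have hdivle : (w i.castSucc).1 / τ ≤ ((w i.castSucc).1 + 1) / τ :=
        Nat.div_le_div_right (by omega)
      split
      · rename_i hne
        have hne' : ((w i.castSucc).1 + 1) / τ ≠ (w i.castSucc).1 / τ := by
          intro hEq
          apply hne
          rw [h]
          simp [hEq]
        have hlt : (w i.castSucc).1 / τ < ((w i.castSucc).1 + 1) / τ :=
          lt_of_le_of_ne hdivle (Ne.symm hne')
        rw [e1, e2, h]
        exact hlp1 _ _ _ hlt
      · rw [e1, e2, h]
        exact hlp0 _ _ _ hdivle
    · -- vertical step
      rw [e1, e2, h]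
      have hEq : ((((w i.castSucc).1, (w i.castSucc).2 + 1).2 +
          ((w i.castSucc).1, (w i.castSucc).2 + 1).1 / τ : ℕ) : ℤ) -
          (((w i.castSucc).2 + (w i.castSucc).1 / τ : ℕ) : ℤ) = 1 := by
        push_cast; ring
      rw [hEq]
      split <;> norm_num
  -- x coordinate grows by at most 1 per step
  have hx : ∀ k, ∀ hk : k ≤ L,
      (w ⟨k, Nat.lt_succ_of_le hk⟩).1 ≤ (w ⟨0, Nat.succ_pos L⟩).1 + k := by
    intro k
    induction k with
    | zero => intro _; simp
    | succ p ih =>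
      intro hk
      have hp : p < L := by omega
      have ihp := ih (by omega)
      rcases hstep ⟨p, hp⟩ with h | h
      · have h' : (w ⟨p+1, Nat.lt_succ_of_le hk⟩).1 = (w ⟨p, hp.trans_le (Nat.le_succ L)⟩).1 + 1 := by
          rw [show (⟨p+1, Nat.lt_succ_of_le hk⟩ : Fin (L+1)) = (⟨p, hp⟩ : Fin L).succ from rfl, h]
          rfl
        omega
      · have h' : (w ⟨p+1, Nat.lt_succ_of_le hk⟩).1 = (w ⟨p, hp.trans_le (Nat.le_succ L)⟩).1 := by
          rw [show (⟨p+1, Nat.lt_succ_of_le hk⟩ : Fin (L+1)) = (⟨p, hp⟩ : Fin L).succ from rfl, h]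
          rfl
        omega
  -- telescoping
  have hcard : ((Finset.univ.filter (fun i : Fin L =>
        ((w i.succ).1 / τ, (w i.succ).2 / Q) ≠
        ((w i.castSucc).1 / τ, (w i.castSucc).2 / Q))).card : ℤ)
      ≤ (a L : ℤ) - (a 0 : ℤ) := by
    rw [Finset.card_filter]
    push_cast
    calc (∑ i : Fin L, if ((w i.succ).1 / τ, (w i.succ).2 / Q) ≠
            ((w i.castSucc).1 / τ, (w i.castSucc).2 / Q) then (1:ℤ) else 0)
        ≤ ∑ i : Fin L, ((a (i.1 + 1) : ℤ) - (a i.1 : ℤ)) := Finset.sum_le_sum (fun i _ => key i)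
      _ = ∑ k ∈ Finset.range L, ((a (k + 1) : ℤ) - (a k : ℤ)) :=
          Fin.sum_univ_eq_sum_range (fun k => ((a (k+1) : ℤ) - (a k : ℤ))) L
      _ = (a L : ℤ) - (a 0 : ℤ) := Finset.sum_range_sub (fun k => (a k : ℤ)) L
  -- final arithmetic
  have eL : a L = (w ⟨L, Nat.lt_succ_self L⟩).2 + (w ⟨L, Nat.lt_succ_self L⟩).1 / τ := by
    have hv : (⟨min L L, hmin L⟩ : Fin (L+1)) = ⟨L, Nat.lt_succ_self L⟩ := Fin.ext (min_self L)
    simp only [ha]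
    rw [hv]
  have e0 : a 0 = (w ⟨0, Nat.succ_pos L⟩).2 + (w ⟨0, Nat.succ_pos L⟩).1 / τ := by
    have hv : (⟨min 0 L, hmin 0⟩ : Fin (L+1)) = ⟨0, Nat.succ_pos L⟩ := Fin.ext (Nat.zero_min L)
    simp only [ha]
    rw [hv]
  have hxL := hx L le_rfl
  have hdiv : (w ⟨L, Nat.lt_succ_self L⟩).1 / τ ≤ (w ⟨0, Nat.succ_pos L⟩).1 / τ + L / τ + 1 := by
    have h1 : (w ⟨L, Nat.lt_succ_self L⟩).1 / τ ≤ ((w ⟨0, Nat.succ_pos L⟩).1 + L) / τ :=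
      Nat.div_le_div_right hxL
    have h2 : ((w ⟨0, Nat.succ_pos L⟩).1 + L) / τ ≤ (w ⟨0, Nat.succ_pos L⟩).1 / τ + L / τ + 1 := by
      rw [Nat.add_div (by omega : 0 < τ)]
      split <;> omega
    omega
  have hrL := hrow ⟨L, Nat.lt_succ_self L⟩
  have goal' : ((Finset.univ.filter (fun i : Fin L =>
        ((w i.succ).1 / τ, (w i.succ).2 / Q) ≠
        ((w i.castSucc).1 / τ, (w i.castSucc).2 / Q))).card : ℤ) ≤ 4 * (m + 2) := by
    calc _ ≤ (a L : ℤ) - (a 0 : ℤ) := hcard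
      _ ≤ 4 * (m + 2) := by
          rw [eL, e0]
          exact hlp2 m _ _ _ _ (L / τ) hrL hdiv hLτ
  exact_mod_cast goal'
end

section
/- In the primal-dual online path packing algorithm with minimum capacity c_min ≥ 1 and maximum path length p_max: if x_e = (2^{flow(e)/c(e)} − 1)/p_max < 3 for every edge e (which holds because an update requires the path weight to be less than 1 and capacities are at least 1), then flow(e) ≤ c(e)·log_2(1 + 3·p_max) for every edge e. -/
/-- Load bound of the primal-dual path packing algorithm: if
`x_e = (2^{flow(e)/c(e)} − 1)/p_max < 3` for an edge `e` with capacity `c(e) ≥ 1`,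
then `flow(e) ≤ c(e) · log₂(1 + 3 p_max)`. -/
theorem stmt_18 (ce pmax : ℝ) (hc : 1 ≤ ce) (hp : 1 ≤ pmax) (flow : ℕ)
    (hx : ((2 : ℝ) ^ ((flow : ℝ) / ce) - 1) / pmax < 3) :
    (flow : ℝ) ≤ ce * Real.logb 2 (1 + 3 * pmax) := by
  have hp0 : (0:ℝ) < pmax := by linarith
  have hc0 : (0:ℝ) < ce := by linarith
  have h1 : (2 : ℝ) ^ ((flow : ℝ) / ce) < 1 + 3 * pmax := by
    have := (div_lt_iff₀ hp0).mp hx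
    linarith
  have h2 : (flow : ℝ) / ce ≤ Real.logb 2 (1 + 3 * pmax) := by
    have := Real.logb_le_logb_of_le (b := 2) (by norm_num) (Real.rpow_pos_of_pos two_pos _) (le_of_lt h1)
    rwa [Real.logb_rpow (by norm_num : (0:ℝ) < 2) (by norm_num)] at this
  calc (flow : ℝ) = ce * ((flow : ℝ) / ce) := by field_simp
    _ ≤ ce * Real.logb 2 (1 + 3 * pmax) := by
        exact mul_le_mul_of_nonneg_left h2 (le_of_lt hc0)
end

section
/- In the primal-dual online path packing algorithm, for each accepted request routed along path p with weight α(p) = Σ_{e∈p} x_e < 1 and |p| ≤ p_max edges, the increase of the primal objective Σ_e x_e·c(e) + Σ_i z_i is at most 2, while the dual objective increases by exactly 1; consequently, by weak LP duality, the number of accepted requests is at least half the optimal fractional path packing value. -/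
open Finset in
/-- Primal-dual analysis of the online path packing algorithm.  When a request is
accepted and routed along a path `p` (a set of at most `p_max` edges) with weight
`α(p) = Σ_{e∈p} x_e < 1`, the primal variables are updated by
`x_e ← x_e·2^{1/c(e)} + (2^{1/c(e)}−1)/p_max` for `e ∈ p` and `z_i ← 1 − α(p)`;
the increase of the primal objective `Σ_e x_e c(e) + Σ_i z_i` is then at most `2`,
while the dual objective increases by exactly `1`.  Consequently, by weak LP duality
(the optimal fractional packing value `opt` is at most the final primal objective
value), the number `N` of accepted requests satisfies `N ≥ opt/2`. -/
theorem stmt_19 {ι : Type*} [DecidableEq ι] (E : Finset ι) (c : ι → ℝ) (hc : ∀ e ∈ E, 1 ≤ c e)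
    (pmax : ℝ) (hpmax : 1 ≤ pmax)
    (x x' : ι → ℝ) (hx : ∀ e, 0 ≤ x e)
    (p : Finset ι) (hpE : p ⊆ E) (hcard : (p.card : ℝ) ≤ pmax)
    (hα : ∑ e ∈ p, x e < 1)
    (hupd : ∀ e ∈ E, x' e =
      if e ∈ p then x e * (2 : ℝ) ^ ((1 : ℝ) / c e) + ((2 : ℝ) ^ ((1 : ℝ) / c e) - 1) / pmax
      else x e)
    (opt : ℝ) (N : ℕ) (Pobj : ℕ → ℝ) (hP0 : Pobj 0 = 0)
    (hstep : ∀ k < N, Pobj (k + 1) - Pobj k ≤ 2)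
    (hweak : opt ≤ Pobj N) :
    ((∑ e ∈ E, (x' e - x e) * c e) + (1 - ∑ e ∈ p, x e) ≤ 2) ∧ opt / 2 ≤ (N : ℝ) := by
  have hpm0 : (0:ℝ) < pmax := lt_of_lt_of_le one_pos hpmax
  constructor
  · -- reduce sum over E to sum over p
    have hsum : ∑ e ∈ E, (x' e - x e) * c e = ∑ e ∈ p, (x' e - x e) * c e := by
      refine (Finset.sum_subset hpE ?_).symm
      intro e heE hep
      rw [hupd e heE, if_neg hep]
      ring
    rw [hsum]
    have key : ∀ e ∈ p, (x' e - x e) * c e ≤ x e + 1 / pmax := by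
      intro e hep
      have heE := hpE hep
      have hce : 1 ≤ c e := hc e heE
      have hce0 : 0 < c e := lt_of_lt_of_le one_pos hce
      have hb : (2:ℝ) ^ ((1:ℝ)/c e) ≤ 1 + (1/c e) := by
        have := rpow_one_add_le_one_add_mul_self (s := 1) (by norm_num)
          (p := (1:ℝ)/c e) (by positivity) ((div_le_one hce0).mpr hce)
        norm_num at this ⊢; simpa using this
      have hb1 : (1:ℝ) ≤ (2:ℝ) ^ ((1:ℝ)/c e) :=
        Real.one_le_rpow (by norm_num) (by positivity)
      have hcmul : ((2:ℝ) ^ ((1:ℝ)/c e) - 1) * c e ≤ 1 := by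
        have : (2:ℝ) ^ ((1:ℝ)/c e) - 1 ≤ 1/c e := by linarith
        calc ((2:ℝ) ^ ((1:ℝ)/c e) - 1) * c e ≤ (1/c e) * c e := by
              exact mul_le_mul_of_nonneg_right this hce0.le
          _ = 1 := by field_simp
      rw [hupd e heE, if_pos hep]
      have hfac : (x e * (2:ℝ) ^ ((1:ℝ)/c e) + ((2:ℝ) ^ ((1:ℝ)/c e) - 1)/pmax - x e) * c e
          = (x e + 1/pmax) * (((2:ℝ) ^ ((1:ℝ)/c e) - 1) * c e) := by
        field_simp; ring
      rw [hfac]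
      have hxp : 0 ≤ x e + 1/pmax := add_nonneg (hx e) (by positivity)
      calc (x e + 1/pmax) * (((2:ℝ) ^ ((1:ℝ)/c e) - 1) * c e)
          ≤ (x e + 1/pmax) * 1 := by
            apply mul_le_mul_of_nonneg_left hcmul hxp
        _ = x e + 1/pmax := by ring
    have h1 : ∑ e ∈ p, (x' e - x e) * c e ≤ ∑ e ∈ p, (x e + 1/pmax) :=
      Finset.sum_le_sum key
    have h2 : ∑ e ∈ p, (x e + 1/pmax) = (∑ e ∈ p, x e) + p.card * (1/pmax) := by
      rw [Finset.sum_add_distrib, Finset.sum_const, nsmul_eq_mul]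
    have h3 : (p.card : ℝ) * (1/pmax) ≤ 1 := by
      rw [mul_one_div, div_le_one hpm0]; exact hcard
    linarith
  · have hPN : Pobj N ≤ 2 * N := by
      have : ∀ n ≤ N, Pobj n ≤ 2 * n := by
        intro n hn
        induction n with
        | zero => simp [hP0]
        | succ k ih =>
          have hk : k < N := lt_of_lt_of_le (Nat.lt_succ_self k) hn
          have := hstep k hk
          have := ih hk.le
          push_cast
          linarith
      exact this N le_rfl
    linarith
end
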